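/- Fix reals a, r > 0, b ∈ (a, a + min(1, r)), and β ∈ ((a/b)^(1/n), 1) where n ≥ m are positive integers. For 0 ≤ j ≤ m−1 define p_j = (b·β^j − a, sqrt(1 − (b·β^j − a)²), 0), and for 0 ≤ k ≤ n−1 define q_k = (−b·β^k, 0, r·sqrt(1 − ((a − b·β^k)/r)²)). Then the squared distance |p_j q_k|² equals 2b²β^(j+k) + 1 + r² − a². -/

import Mathlib

noncomputable def pt (x y z : ℝ) : EuclideanSpace ℝ (Fin 3) := WithLp.toLp 2 ![x, y, z]

/-! For `p = (x, y, 0)` on the unit circle and `q = (u, 0, w)` on the circle of radius `r` about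
`(-a, 0, 0)`, `|pq|² = (x - u)² + (1 - x²) + (r² - (u + a)²) = 1 + r² - a² - 2u(x + a)`, which for
`x = bβʲ - a`, `u = -bβᵏ` is the claimed value. Both points do lie on their circles because
`a < bβⁱ ≤ b < a + min 1 r` for `i < n`, as `a / b < βⁿ ≤ βⁱ ≤ 1`. -/

open Real

lemma dist_pt_sq (x y z x' y' z' : ℝ) :
    dist (pt x y z) (pt x' y' z') ^ 2 = (x - x') ^ 2 + (y - y') ^ 2 + (z - z') ^ 2 := by
  rw [EuclideanSpace.dist_eq, sq_sqrt (by positivity), Fin.sum_univ_three]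
  simp [pt, Real.dist_eq, sq_abs]

lemma dist_sq_of_mem_perpendicular_circles {a r x y u w : ℝ} (hp : x ^ 2 + y ^ 2 = 1)
    (hq : (u + a) ^ 2 + w ^ 2 = r ^ 2) :
    dist (pt x y 0) (pt u 0 w) ^ 2 = 1 + r ^ 2 - a ^ 2 - 2 * u * (x + a) := by
  rw [dist_pt_sq]
  linear_combination hp + hq

lemma sq_add_sq_mul_sqrt_one_sub_div_sq {r x : ℝ} (hr : 0 < r) (hx : |x| ≤ r) :
    x ^ 2 + (r * √(1 - (x / r) ^ 2)) ^ 2 = r ^ 2 := by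
  have hxr : (x / r) ^ 2 ≤ 1 := by
    rw [div_pow, div_le_one (by positivity)]
    exact sq_le_sq' (abs_le.mp hx).1 (abs_le.mp hx).2
  rw [mul_pow, sq_sqrt (sub_nonneg.mpr hxr)]
  field_simp
  ring

lemma lt_pow_of_rpow_one_div_lt {x β : ℝ} {n : ℕ} (hx : 0 ≤ x) (hn : n ≠ 0)
    (h : x ^ ((1 : ℝ) / n) < β) : x < β ^ n :=
  calc x = (x ^ ((1 : ℝ) / n)) ^ n := by rw [one_div, rpow_inv_natCast_pow hx hn]
    _ < β ^ n := pow_lt_pow_left₀ h (rpow_nonneg hx _) hn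

lemma lt_mul_pow_of_rpow_one_div_lt {a b β : ℝ} {n i : ℕ} (ha : 0 ≤ a) (hb : 0 < b)
    (hβ : (a / b) ^ ((1 : ℝ) / n) < β) (hβ1 : β ≤ 1) (hi : i < n) : a < b * β ^ i := by
  have hβ0 : 0 ≤ β := (rpow_nonneg (by positivity) _).trans hβ.le
  have : a / b < β ^ i :=
    calc a / b < β ^ n := lt_pow_of_rpow_one_div_lt (by positivity) (by omega) hβ
      _ ≤ β ^ i := pow_le_pow_of_le_one hβ0 hβ1 hi.le
  rwa [div_lt_iff₀' hb] at this

/-- In the perpendicular-circles construction, the squared distance between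
`p_j = (b·β^j − a, √(1 − (b·β^j − a)²), 0)` and
`q_k = (−b·β^k, 0, r·√(1 − ((a − b·β^k)/r)²))` equals `2b²β^(j+k) + 1 + r² − a²`. -/
theorem perpendicular_circles_sq_dist (a r b β : ℝ) (m n : ℕ)
    (ha : 0 < a) (hr : 0 < r) (hmn : m ≤ n) (hm : 1 ≤ m)
    (hb : b ∈ Set.Ioo a (a + min 1 r))
    (hβ : β ∈ Set.Ioo ((a / b) ^ ((1 : ℝ) / n)) 1)
    (j k : ℕ) (hj : j ≤ m - 1) (hk : k ≤ n - 1) :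
    dist (pt (b * β ^ j - a) (Real.sqrt (1 - (b * β ^ j - a) ^ 2)) 0)
        (pt (-(b * β ^ k)) 0 (r * Real.sqrt (1 - ((a - b * β ^ k) / r) ^ 2))) ^ 2 =
      2 * b ^ 2 * β ^ (j + k) + 1 + r ^ 2 - a ^ 2 := by
  obtain ⟨hab, hbr⟩ := hb
  obtain ⟨hβ, hβ1⟩ := hβ
  have hb0 : 0 < b := ha.trans hab
  have hβ0 : 0 ≤ β := (rpow_nonneg (by positivity) _).trans hβ.le
  have hbounds : ∀ i < n, |b * β ^ i - a| ≤ 1 ∧ |a - b * β ^ i| ≤ r := fun i hi ↦ by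
    have hlow := lt_mul_pow_of_rpow_one_div_lt ha.le hb0 hβ hβ1.le hi
    have hupp : b * β ^ i ≤ b := mul_le_of_le_one_right hb0.le (pow_le_one₀ hβ0 hβ1.le)
    rw [abs_sub_comm a, abs_of_pos (sub_pos.mpr hlow)]
    exact ⟨by linarith [min_le_left 1 r], by linarith [min_le_right 1 r]⟩
  have hp := sq_add_sq_mul_sqrt_one_sub_div_sq one_pos (hbounds j (by omega)).1
  have hq := sq_add_sq_mul_sqrt_one_sub_div_sq hr (hbounds k (by omega)).2
  simp only [div_one, one_mul, one_pow] at hp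
  nth_rw 1 [← neg_add_eq_sub] at hq
  rw [dist_sq_of_mem_perpendicular_circles hp hq]
  ring
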